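/- Let R > 0 and let f : ℝ → ℂ be continuous with support contained in [-R, R]; let g : ℝ → ℂ be integrable. Let L > 2R and suppose |g| is nondecreasing on (−∞, −L/2 + R] and nonincreasing on [L/2 − R, ∞). Define h(x) := (f *_L g)(x) − (f * g)(x), where (f * g)(x) = ∫_ℝ f(y) g(x−y) dy is ordinary convolution. Set M := R · sup|f|. Then for x ∈ [-L/2 + R, L/2 − R], h(x) = 0; for x ∈ [-L/2, −L/2 + R), |h(x)| ≤ M(|g(−L/2)| + |g(L/2 − R)|); and for x ∈ (L/2 − R, L/2], |h(x)| ≤ M(|g(L/2)| + |g(−L/2 + R)|). (Lemma A.2.) -/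

import Mathlib

open MeasureTheory

/-- The periodic restriction `u^{(L)}` of `u : ℝ → ℂ`: the `L`-periodic function
coinciding with `u` on `[-L/2, L/2)`. -/
noncomputable def periodicRestrict (L : ℝ) (u : ℝ → ℂ) (x : ℝ) : ℂ :=
  u (x - L * ⌊x / L + 1 / 2⌋)

/-!
Since `f` lives on `[-R, R]` and `L > 2R`, the two convolutions only differ where `x - y` leaves
the box `[-L/2, L/2)`, and there the periodic kernel is the translate `g(x - y ± L)`. For `x`
in the inner box this never happens; for `x` within `R` of an edge it happens for `y` in an
interval of length at most `R`, on which the monotonicity of `|g|` bounds both `|g(x - y)|` and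
`|g(x - y ± L)|` by their values at the ends of the monotonicity ranges.
-/

open Set

section General

variable {α 𝕜 : Type*} [MeasurableSpace α] {μ : Measure α} [NormedRing 𝕜] [NormedSpace ℝ 𝕜]

theorem setIntegral_mul_sub_integral_mul_eq {f k v d : α → 𝕜} {s : Set α} {C : ℝ}
    (hfs : Function.support f ⊆ s) (hf : AEStronglyMeasurable f μ) (hfC : ∀ y, ‖f y‖ ≤ C)
    (hv : Integrable v μ) (hd : Integrable d μ)
    (hk : ∀ᵐ y ∂μ, y ∈ Function.support f → k y = v y + d y) :
    ∫ y in s, f y * k y ∂μ - ∫ y, f y * v y ∂μ = ∫ y, f y * d y ∂μ := by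
  have hfC' : ∀ᵐ y ∂μ, ‖f y‖ ≤ C := ae_of_all _ hfC
  rw [sub_eq_iff_eq_add', ← integral_add (hv.bdd_mul hf hfC') (hd.bdd_mul hf hfC'),
    setIntegral_eq_integral_of_forall_compl_eq_zero fun y hy => by
      rw [Function.notMem_support.mp fun h => hy (hfs h), zero_mul]]
  refine integral_congr_ae (hk.mono fun y hy => ?_)
  by_cases hy0 : f y = 0
  · simp [hy0]
  · show f y * k y = f y * v y + f y * d y
    rw [hy hy0, mul_add]

theorem norm_integral_mul_indicator_le {f u : α → 𝕜} {s : Set α} {A B : ℝ}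
    (hs : MeasurableSet s) (hμs : μ s < ⊤) (hfA : ∀ y, ‖f y‖ ≤ A) (huB : ∀ y ∈ s, ‖u y‖ ≤ B) :
    ‖∫ y, f y * s.indicator u y ∂μ‖ ≤ A * B * μ.real s := by
  simp_rw [← indicator_mul_right, integral_indicator hs]
  refine norm_setIntegral_le_of_norm_le_const hμs fun y hy => (norm_mul_le _ _).trans ?_
  exact mul_le_mul (hfA y) (huB y hy) (norm_nonneg _) ((norm_nonneg _).trans (hfA y))

end General

theorem periodicRestrict_eq_of_sub_mem {L : ℝ} (hL : 0 < L) (u : ℝ → ℂ) (n : ℤ) {t : ℝ}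
    (ht : t - n * L ∈ Ico (-L / 2) (L / 2)) : periodicRestrict L u t = u (t - n * L) := by
  have hfloor : ⌊t / L + 1 / 2⌋ = n := by
    have h1 : (n - 1 / 2 : ℝ) ≤ t / L := by rw [le_div_iff₀ hL]; linarith [ht.1]
    have h2 : t / L < n + 1 / 2 := by rw [div_lt_iff₀ hL]; linarith [ht.2]
    rw [Int.floor_eq_iff]
    constructor <;> linarith
  rw [periodicRestrict, hfloor, mul_comm]

theorem periodicRestrict_eq_self {L : ℝ} (hL : 0 < L) (u : ℝ → ℂ) {t : ℝ}
    (ht : t ∈ Ico (-L / 2) (L / 2)) : periodicRestrict L u t = u t := by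
  simpa using periodicRestrict_eq_of_sub_mem hL u 0 (by simpa using ht)

noncomputable def torusConv (L : ℝ) (f g : ℝ → ℂ) (x : ℝ) : ℂ :=
  ∫ y in Ico (-L / 2) (L / 2), f y * periodicRestrict L g (x - y)

section Comparison

variable {R L x C : ℝ} {f g : ℝ → ℂ}

theorem periodicRestrict_sub_eq_left (u : ℝ → ℂ) (hRL : 2 * R < L)
    (hx : x ∈ Ico (-L / 2) (-L / 2 + R)) {y : ℝ} (hy : y ∈ Icc (-R) R) :
    periodicRestrict L u (x - y) =
      u (x - y) + (Ioc (x + L / 2) R).indicator (fun y => u (x + L - y) - u (x - y)) y := by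
  have hL : 0 < L := by linarith [hx.1, hx.2]
  by_cases hyx : y ≤ x + L / 2
  · rw [indicator_of_notMem (by rintro ⟨h, -⟩; linarith), add_zero]
    exact periodicRestrict_eq_self hL u ⟨by linarith, by linarith [hx.2, hy.1]⟩
  · rw [indicator_of_mem (show y ∈ Ioc (x + L / 2) R from ⟨not_le.mp hyx, hy.2⟩),
      add_sub_cancel, periodicRestrict_eq_of_sub_mem hL u (-1) ⟨by push_cast; linarith [hy.2, hx.1],
        by push_cast; linarith⟩]
    congr 1; push_cast; ring

theorem periodicRestrict_sub_eq_right (u : ℝ → ℂ) (hRL : 2 * R < L)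
    (hx : x ∈ Ioc (L / 2 - R) (L / 2)) {y : ℝ} (hy : y ∈ Icc (-R) R) :
    periodicRestrict L u (x - y) =
      u (x - y) + (Icc (-R) (x - L / 2)).indicator (fun y => u (x - L - y) - u (x - y)) y := by
  have hL : 0 < L := by linarith [hx.1, hx.2]
  by_cases hyx : y ≤ x - L / 2
  · rw [indicator_of_mem (show y ∈ Icc (-R) (x - L / 2) from ⟨hy.1, hyx⟩), add_sub_cancel,
      periodicRestrict_eq_of_sub_mem hL u 1 ⟨by push_cast; linarith,
        by push_cast; linarith [hy.1, hx.2]⟩]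
    congr 1; push_cast; ring
  · rw [indicator_of_notMem (by rintro ⟨-, h⟩; linarith), add_zero]
    exact periodicRestrict_eq_self hL u ⟨by linarith [hx.1, hy.2], by linarith⟩

theorem torusConv_sub_integral_eq_zero (hfsupp : Function.support f ⊆ Icc (-R) R)
    (hfm : AEStronglyMeasurable f) (hfC : ∀ y, ‖f y‖ ≤ C) (hg : Integrable g) (hRL : 2 * R < L)
    (hx : x ∈ Icc (-L / 2 + R) (L / 2 - R)) :
    torusConv L f g x - ∫ y, f y * g (x - y) = 0 := by
  rw [torusConv, setIntegral_mul_sub_integral_mul_eq (d := 0)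
    (hfsupp.trans (Icc_subset_Ico (by linarith) (by linarith)))
    hfm hfC (hg.comp_sub_left x) (integrable_zero _ _ _)]
  · simp
  -- `x - y = L/2` can only happen on the null set `{x - L/2}`.
  filter_upwards [Measure.ae_ne volume (x - L / 2)] with y hy hyf
  have hyR := hfsupp hyf
  have hL : 0 < L := by linarith [hyR.1, hyR.2]
  rw [Pi.zero_apply, add_zero]
  refine periodicRestrict_eq_self hL g ⟨by linarith [hx.1, hyR.2], ?_⟩
  exact lt_of_le_of_ne (by linarith [hx.2, hyR.1]) fun h => hy (by linarith)

theorem norm_torusConv_sub_integral_le_left (hfsupp : Function.support f ⊆ Icc (-R) R)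
    (hfm : AEStronglyMeasurable f) (hfC : ∀ y, ‖f y‖ ≤ C) (hg : Integrable g) (hRL : 2 * R < L)
    (hmono : MonotoneOn (fun x => ‖g x‖) (Iic (-L / 2 + R)))
    (hanti : AntitoneOn (fun x => ‖g x‖) (Ici (L / 2 - R)))
    (hx : x ∈ Ico (-L / 2) (-L / 2 + R)) :
    ‖torusConv L f g x - ∫ y, f y * g (x - y)‖ ≤ R * C * (‖g (-L / 2)‖ + ‖g (L / 2 - R)‖) := by
  have ⟨hx1, hx2⟩ := hx
  have hd : Integrable ((Ioc (x + L / 2) R).indicator fun y => g (x + L - y) - g (x - y)) :=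
    ((hg.comp_sub_left (x + L)).sub (hg.comp_sub_left x)).indicator measurableSet_Ioc
  rw [torusConv, setIntegral_mul_sub_integral_mul_eq
    (hfsupp.trans (Icc_subset_Ico (by linarith) (by linarith))) hfm hfC (hg.comp_sub_left x) hd
    (ae_of_all _ fun y hy => periodicRestrict_sub_eq_left g hRL hx (hfsupp hy))]
  refine (norm_integral_mul_indicator_le (B := ‖g (-L / 2)‖ + ‖g (L / 2 - R)‖)
    measurableSet_Ioc measure_Ioc_lt_top hfC fun y hy => ?_).trans ?_
  · obtain ⟨hy1, hy2⟩ := hy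
    calc ‖g (x + L - y) - g (x - y)‖ ≤ ‖g (x + L - y)‖ + ‖g (x - y)‖ := norm_sub_le _ _
      _ ≤ ‖g (L / 2 - R)‖ + ‖g (-L / 2)‖ := by
        gcongr
        · exact hanti (by simp) (by simp only [mem_Ici]; linarith) (by linarith)
        · exact hmono (by simp only [mem_Iic]; linarith) (by simp only [mem_Iic]; linarith)
            (by linarith)
      _ = ‖g (-L / 2)‖ + ‖g (L / 2 - R)‖ := add_comm _ _
  · have hC : 0 ≤ C := (norm_nonneg _).trans (hfC 0)
    rw [Real.volume_real_Ioc, mul_rotate R]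
    exact mul_le_mul_of_nonneg_left (max_le (by linarith) (by linarith)) (by positivity)

theorem norm_torusConv_sub_integral_le_right (hfsupp : Function.support f ⊆ Icc (-R) R)
    (hfm : AEStronglyMeasurable f) (hfC : ∀ y, ‖f y‖ ≤ C) (hg : Integrable g) (hRL : 2 * R < L)
    (hmono : MonotoneOn (fun x => ‖g x‖) (Iic (-L / 2 + R)))
    (hanti : AntitoneOn (fun x => ‖g x‖) (Ici (L / 2 - R)))
    (hx : x ∈ Ioc (L / 2 - R) (L / 2)) :
    ‖torusConv L f g x - ∫ y, f y * g (x - y)‖ ≤ R * C * (‖g (L / 2)‖ + ‖g (-L / 2 + R)‖) := by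
  have ⟨hx1, hx2⟩ := hx
  have hd : Integrable ((Icc (-R) (x - L / 2)).indicator fun y => g (x - L - y) - g (x - y)) :=
    ((hg.comp_sub_left (x - L)).sub (hg.comp_sub_left x)).indicator measurableSet_Icc
  rw [torusConv, setIntegral_mul_sub_integral_mul_eq
    (hfsupp.trans (Icc_subset_Ico (by linarith) (by linarith))) hfm hfC (hg.comp_sub_left x) hd
    (ae_of_all _ fun y hy => periodicRestrict_sub_eq_right g hRL hx (hfsupp hy))]
  refine (norm_integral_mul_indicator_le (B := ‖g (L / 2)‖ + ‖g (-L / 2 + R)‖)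
    measurableSet_Icc measure_Icc_lt_top hfC fun y hy => ?_).trans ?_
  · obtain ⟨hy1, hy2⟩ := hy
    calc ‖g (x - L - y) - g (x - y)‖ ≤ ‖g (x - L - y)‖ + ‖g (x - y)‖ := norm_sub_le _ _
      _ ≤ ‖g (-L / 2 + R)‖ + ‖g (L / 2)‖ := by
        gcongr
        · exact hmono (by simp only [mem_Iic]; linarith) (by simp) (by linarith)
        · exact hanti (by simp only [mem_Ici]; linarith) (by simp only [mem_Ici]; linarith)
            (by linarith)
      _ = ‖g (L / 2)‖ + ‖g (-L / 2 + R)‖ := add_comm _ _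
  · have hC : 0 ≤ C := (norm_nonneg _).trans (hfC 0)
    rw [Real.volume_real_Icc, mul_rotate R]
    exact mul_le_mul_of_nonneg_left (max_le (by linarith) (by linarith)) (by positivity)

end Comparison

theorem torus_conv_vs_line_conv_general (R : ℝ) (f g : ℝ → ℂ)
    (hf : Continuous f) (hfsupp : Function.support f ⊆ Set.Icc (-R) R)
    (hg : Integrable g) (L : ℝ) (hL : 2 * R < L)
    (hmono : MonotoneOn (fun x => ‖g x‖) (Set.Iic (-L / 2 + R)))
    (hanti : AntitoneOn (fun x => ‖g x‖) (Set.Ici (L / 2 - R)))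
    (h : ℝ → ℂ)
    (hdef : h = fun x =>
      (∫ y in Set.Ico (-L / 2) (L / 2), f y * periodicRestrict L g (x - y)) -
        ∫ y : ℝ, f y * g (x - y))
    (M : ℝ) (hM : M = R * ⨆ y : ℝ, ‖f y‖) :
    (∀ x ∈ Set.Icc (-L / 2 + R) (L / 2 - R), h x = 0) ∧
    (∀ x ∈ Set.Ico (-L / 2) (-L / 2 + R),
      ‖h x‖ ≤ M * (‖g (-L / 2)‖ + ‖g (L / 2 - R)‖)) ∧
    (∀ x ∈ Set.Ioc (L / 2 - R) (L / 2),
      ‖h x‖ ≤ M * (‖g (L / 2)‖ + ‖g (-L / 2 + R)‖)) := by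
  have hfc : HasCompactSupport f :=
    HasCompactSupport.intro isCompact_Icc fun y hy => Function.notMem_support.mp (hy <| hfsupp ·)
  have hfC : ∀ y, ‖f y‖ ≤ ⨆ y, ‖f y‖ :=
    le_ciSup (hf.norm.bddAbove_range_of_hasCompactSupport hfc.norm)
  have hfm : AEStronglyMeasurable f := hf.aestronglyMeasurable
  subst hdef hM
  exact ⟨fun x hx => torusConv_sub_integral_eq_zero hfsupp hfm hfC hg hL hx,
    fun x hx => norm_torusConv_sub_integral_le_left hfsupp hfm hfC hg hL hmono hanti hx,
    fun x hx => norm_torusConv_sub_integral_le_right hfsupp hfm hfC hg hL hmono hanti hx⟩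

/-- Lemma A.2: comparison of the torus convolution
`(f *_L g)(x) = ∫_{-L/2}^{L/2} f(y) g^{(L)}(x−y) dy` with the ordinary convolution
`(f * g)(x) = ∫_ℝ f(y) g(x−y) dy`, for `f` continuous supported in `[-R,R]`, `g`
integrable with `|g|` nondecreasing on `(−∞, −L/2+R]` and nonincreasing on
`[L/2−R, ∞)`, and `L > 2R`. With `M = R·sup|f|`, the difference `h` vanishes on
`[-L/2+R, L/2−R]` and obeys the stated bounds near the two edges of the box. -/
theorem torus_conv_vs_line_conv (R : ℝ) (hR : 0 < R) (f g : ℝ → ℂ)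
    (hf : Continuous f) (hfsupp : Function.support f ⊆ Set.Icc (-R) R)
    (hg : Integrable g) (L : ℝ) (hL : 2 * R < L)
    (hmono : MonotoneOn (fun x => ‖g x‖) (Set.Iic (-L / 2 + R)))
    (hanti : AntitoneOn (fun x => ‖g x‖) (Set.Ici (L / 2 - R)))
    (h : ℝ → ℂ)
    (hdef : h = fun x =>
      (∫ y in Set.Ico (-L / 2) (L / 2), f y * periodicRestrict L g (x - y)) -
        ∫ y : ℝ, f y * g (x - y))
    (M : ℝ) (hM : M = R * ⨆ y : ℝ, ‖f y‖) :
    (∀ x ∈ Set.Icc (-L / 2 + R) (L / 2 - R), h x = 0) ∧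
    (∀ x ∈ Set.Ico (-L / 2) (-L / 2 + R),
      ‖h x‖ ≤ M * (‖g (-L / 2)‖ + ‖g (L / 2 - R)‖)) ∧
    (∀ x ∈ Set.Ioc (L / 2 - R) (L / 2),
      ‖h x‖ ≤ M * (‖g (L / 2)‖ + ‖g (-L / 2 + R)‖)) :=
  torus_conv_vs_line_conv_general R f g hf hfsupp hg L hL hmono hanti h hdef M hM
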